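/- Let ν ∈ N with ⟨ν, e_i⟩ > 0 for all 1 ≤ i ≤ d, and let 1 ≤ k ≤ d. If the quantity m(k) associated to the algorithm vector w_k is nonzero, then n(k) is also nonzero and ⟨ν, λ_{n(k)}⟩ < ⟨ν, e_{m(k)}⟩. -/

import Mathlib

open scoped BigOperators Classical

namespace QO

/-- The standard pairing `⟨ν, m⟩ = ∑ i, ν i * m i` on `ℚ^d`. -/
def pair (d : ℕ) (ν m : Fin d → ℚ) : ℚ := ∑ i, ν i * m i

/-- `E d lam i` is the `i`-th standard basis vector of `ℚ^d` for `1 ≤ i ≤ d`,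
and equals the characteristic exponent `λ_{i-d}` for `d + 1 ≤ i` (1-based indexing). -/
def E (d : ℕ) (lam : ℕ → Fin d → ℚ) (i : ℕ) : Fin d → ℚ :=
  if 1 ≤ i ∧ i ≤ d then (fun j => if (j : ℕ) = i - 1 then 1 else 0) else lam (i - d)

/-- The lattice `M_j = ℤ^d + ℤλ_1 + ⋯ + ℤλ_j`, as an additive subgroup of `ℚ^d`. -/
def Mlat (d : ℕ) (lam : ℕ → Fin d → ℚ) : ℕ → AddSubgroup (Fin d → ℚ)
  | 0 => AddSubgroup.closure (Set.range fun i : Fin d => (fun j => if j = i then (1 : ℚ) else 0))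
  | (j + 1) => Mlat d lam j ⊔ AddSubgroup.closure {lam (j + 1)}

/-- The dual lattice `N` of `M = M_g`. -/
def Ndual (d g : ℕ) (lam : ℕ → Fin d → ℚ) : Set (Fin d → ℚ) :=
  { ν | ∀ m ∈ Mlat d lam g, ∃ z : ℤ, pair d ν m = (z : ℚ) }

/-- Admissible index sets for `J_k`: `k` indices in `{1, …, d+g}`, at most one of which
exceeds `d`, whose associated vectors are linearly independent over `ℚ`. -/
def IdxOk (d g : ℕ) (lam : ℕ → Fin d → ℚ) (k : ℕ) (I : Finset ℕ) : Prop :=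
  I.card = k ∧ I ⊆ Finset.Icc 1 (d + g) ∧ (I.filter fun i => d + 1 ≤ i).card ≤ 1 ∧
    LinearIndependent ℚ (fun i : {x // x ∈ I} => E d lam i.1)

/-- The set `J_k` of sums `e_{j_1} + ⋯ + e_{j_k}`. -/
def Jset (d g : ℕ) (lam : ℕ → Fin d → ℚ) (k : ℕ) : Set (Fin d → ℚ) :=
  { w | ∃ I : Finset ℕ, IdxOk d g lam k I ∧ w = ∑ i ∈ I, E d lam i }

/-- The set `J_k`, as a finite set. -/
noncomputable def Jfin (d g : ℕ) (lam : ℕ → Fin d → ℚ) (k : ℕ) : Finset (Fin d → ℚ) :=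
  ((Finset.Icc 1 (d + g)).powerset.filter fun I => IdxOk d g lam k I).image
    fun I => ∑ i ∈ I, E d lam i

/-- The support function `ord_{J_k}(ν) = min_{w ∈ J_k} ⟨ν, w⟩`. -/
noncomputable def ordJ (d g : ℕ) (lam : ℕ → Fin d → ℚ) (k : ℕ) (ν : Fin d → ℚ) : ℚ :=
  if h : (Jfin d g lam k).Nonempty then ((Jfin d g lam k).image (pair d ν)).min' (h.image _)
  else 0

/-- `φ_k(ν) = ord_{J_k}(ν) - ord_{J_{k-1}}(ν)` (note `ord_{J_0} = 0`, hence also `φ_0 = 0`). -/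
noncomputable def phiJ (d g : ℕ) (lam : ℕ → Fin d → ℚ) (k : ℕ) (ν : Fin d → ℚ) : ℚ :=
  ordJ d g lam k ν - ordJ d g lam (k - 1) ν

/-- The sort key of the total order `≤_ν` on the indices `1, …, d+g`: sort by the value
`⟨ν, ·⟩`, breaking ties (in particular ties between an `e_i` with `i ≤ d` and a `λ_j`)
by the index, so that `e_i` is placed first. -/
noncomputable def keyIdx (d : ℕ) (lam : ℕ → Fin d → ℚ) (ν : Fin d → ℚ) (i : ℕ) : ℚ ×ₗ ℕ :=
  toLex (pair d ν (E d lam i), i)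

/-- The `≤_ν`-least element of a finite set of indices. -/
noncomputable def leastIdx (d : ℕ) (lam : ℕ → Fin d → ℚ) (ν : Fin d → ℚ) (S : Finset ℕ) : ℕ :=
  if h : S.Nonempty then (ofLex ((S.image (keyIdx d lam ν)).min' (h.image _))).2 else 0

/-- The `≤_ν`-greatest element of a finite set of indices. -/
noncomputable def greatestIdx (d : ℕ) (lam : ℕ → Fin d → ℚ) (ν : Fin d → ℚ)
    (S : Finset ℕ) : ℕ :=
  if h : S.Nonempty then (ofLex ((S.image (keyIdx d lam ν)).max' (h.image _))).2 else 0

/-- The `ℚ`-span of the vectors indexed by `I`. -/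
def spanOf (d : ℕ) (lam : ℕ → Fin d → ℚ) (I : Finset ℕ) : Submodule ℚ (Fin d → ℚ) :=
  Submodule.span ℚ ((fun i => E d lam i) '' (I : Set ℕ))

/-- `n(k)`: the index `n` such that `λ_n` is a summand of `w_k`, and `0` if there is none. -/
noncomputable def nVal (d : ℕ) (I : Finset ℕ) : ℕ :=
  if h : (I.filter fun i => d + 1 ≤ i).Nonempty then (I.filter fun i => d + 1 ≤ i).min' h - d
  else 0

/-- `t(k)`: the least `1 ≤ j ≤ g` with `λ_j ∉ ℓ_k(ν)`, and `g + 1` if there is none. -/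
noncomputable def tVal (d g : ℕ) (lam : ℕ → Fin d → ℚ) (I : Finset ℕ) : ℕ :=
  if h : ((Finset.Icc 1 g).filter fun j => lam j ∉ spanOf d lam I).Nonempty then
    ((Finset.Icc 1 g).filter fun j => lam j ∉ spanOf d lam I).min' h
  else g + 1

/-- `m(k)`: the index `m` with `({e_1, …, e_d} ∩ ℓ_k(ν)) ∖ {summands of w_k} = {e_m}`,
and `0` if this set is empty. -/
noncomputable def mVal (d : ℕ) (lam : ℕ → Fin d → ℚ) (I : Finset ℕ) : ℕ :=
  if h : (((Finset.Icc 1 d).filter fun i => E d lam i ∈ spanOf d lam I) \ I).Nonempty then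
    (((Finset.Icc 1 d).filter fun i => E d lam i ∈ spanOf d lam I) \ I).min' h
  else 0

/-- `i(k)`: the `≤_ν`-least index `1 ≤ i ≤ d + g` with `w_k + e_i ∈ J_{k+1}`. -/
noncomputable def iVal (d g : ℕ) (lam : ℕ → Fin d → ℚ) (ν : Fin d → ℚ) (k : ℕ)
    (I : Finset ℕ) : ℕ :=
  leastIdx d lam ν ((Finset.Icc 1 (d + g)).filter fun i => IdxOk d g lam (k + 1) (insert i I))

/-- One step of the algorithm, from the summands of `w_k` to the summands of `w_{k+1}`:
`a_{k+1} = w_k + e_{i(k)}` and `b_{k+1} = w_k - λ_{n(k)} + λ_{t(k)} + e_{m(k)}`; the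
candidate `b_{k+1}` is discarded when `m(k) = 0` or `t(k) = g + 1`, and otherwise
`w_{k+1} = a_{k+1}` exactly when `⟨ν, a_{k+1}⟩ ≤ ⟨ν, b_{k+1}⟩`. -/
noncomputable def step (d g : ℕ) (lam : ℕ → Fin d → ℚ) (ν : Fin d → ℚ) (k : ℕ)
    (I : Finset ℕ) : Finset ℕ :=
  let a : Finset ℕ := insert (iVal d g lam ν k I) I
  let b : Finset ℕ :=
    insert (mVal d lam I) (insert (d + tVal d g lam I)
      (if nVal d I = 0 then I else I.erase (d + nVal d I)))
  if mVal d lam I = 0 ∨ tVal d g lam I = g + 1 then a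
  else if pair d ν (∑ i ∈ a, E d lam i) ≤ pair d ν (∑ i ∈ b, E d lam i) then a else b

/-- The index sets `W ν k` of summands of the algorithm's vectors `w_k`; the vector `w_1`
is the `≤_ν`-least element of `{e_1, …, e_d, λ_1}`. -/
noncomputable def W (d g : ℕ) (lam : ℕ → Fin d → ℚ) (ν : Fin d → ℚ) : ℕ → Finset ℕ
  | 0 => ∅
  | 1 => {leastIdx d lam ν (insert (d + 1) (Finset.Icc 1 d))}
  | (k + 2) => step d g lam ν (k + 1) (W d g lam ν (k + 1))

/-- The algorithm's vector `w_k`. -/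
noncomputable def wVec (d g : ℕ) (lam : ℕ → Fin d → ℚ) (ν : Fin d → ℚ) (k : ℕ) :
    Fin d → ℚ :=
  ∑ i ∈ W d g lam ν k, E d lam i

/-- `ℓ_k(ν)`: the `ℚ`-span of the summands of `w_k`. -/
noncomputable def ellK (d g : ℕ) (lam : ℕ → Fin d → ℚ) (ν : Fin d → ℚ) (k : ℕ) :
    Submodule ℚ (Fin d → ℚ) :=
  spanOf d lam (W d g lam ν k)

/-- `ℓ_ν^s = span_ℚ{e_j : 1 ≤ j < d + t(k), ⟨ν, e_j⟩ ≤ s}`, where `k` is the index with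
`φ_k(ν) ≤ s < φ_{k+1}(ν)`. -/
noncomputable def ellS (d g : ℕ) (lam : ℕ → Fin d → ℚ) (ν : Fin d → ℚ) (s : ℚ) (k : ℕ) :
    Submodule ℚ (Fin d → ℚ) :=
  Submodule.span ℚ ((fun i => E d lam i) ''
    { i : ℕ | 1 ≤ i ∧ i < d + tVal d g lam (W d g lam ν k) ∧ pair d ν (E d lam i) ≤ s })

/-- `p(k)` (with the convention `λ_0 = 0`). -/
noncomputable def pVal (d g : ℕ) (lam : ℕ → Fin d → ℚ) (ν : Fin d → ℚ) (s : ℚ)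
    (k : ℕ) : ℕ :=
  if nVal d (W d g lam ν k) = 0 then
    if h : ((Finset.Icc 0 g).filter fun j =>
        pair d ν (if j = 0 then (0 : Fin d → ℚ) else lam j) ≤ s).Nonempty then
      ((Finset.Icc 0 g).filter fun j =>
        pair d ν (if j = 0 then (0 : Fin d → ℚ) else lam j) ≤ s).max' h
    else 0
  else
    (insert (nVal d (W d g lam ν k))
      ((Finset.Ioo (nVal d (W d g lam ν k)) (tVal d g lam (W d g lam ν k))).filter fun j =>
        mVal d lam (W d g lam ν k) ≠ 0 ∧
          pair d ν (E d lam (mVal d lam (W d g lam ν k)) - lam (nVal d (W d g lam ν k)) + lam j)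
            ≤ s)).max' (Finset.insert_nonempty _ _)

/-- `q_η`: the index of the `≤_ν`-greatest element of `{e_1, …, e_d} ∩ ℓ(η)`, where
`ℓ(η) = span_ℚ{e_i : η_i ≠ 0}`. -/
noncomputable def qIdx (d : ℕ) (lam : ℕ → Fin d → ℚ) (ν η : Fin d → ℚ) : ℕ :=
  greatestIdx d lam ν ((Finset.Icc 1 d).filter fun i => pair d η (E d lam i) ≠ 0)

/-!
By induction along the algorithm, each `w_k` (`1 ≤ k ≤ d`) lies in `J_k` and satisfies
`⟨ν, λ_{n(k)}⟩ < ⟨ν, e_m⟩` for every basis vector `e_m` that is not a summand of `w_k`.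
The step to `a_{k+1}` preserves this because `e_{i(k)}` is `≤_ν`-least among the admissible new
summands, which include every `e_m ∉ ℓ_k(ν)`. The step to `b_{k+1}` is taken only when
`⟨ν, b_{k+1}⟩ < ⟨ν, a_{k+1}⟩`, which together with the invariant gives
`⟨ν, λ_{t(k)}⟩ < ⟨ν, e_{i(k)}⟩`, and `e_{m(k)}` is the only basis vector of `ℓ_k(ν)` that is not
a summand of `w_k`. Finally `m(k) ≠ 0` forces a summand `λ_{n(k)}`, since a span of basis vectors
contains no other basis vector.
-/

section Vectors

variable {d : ℕ} {lam : ℕ → Fin d → ℚ}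

theorem pair_add (ν x y : Fin d → ℚ) : pair d ν (x + y) = pair d ν x + pair d ν y := by
  simp only [pair, Pi.add_apply, mul_add, Finset.sum_add_distrib]

theorem E_apply {i : ℕ} (hi : i ∈ Finset.Icc 1 d) (j : Fin d) :
    E d lam i j = if (j : ℕ) + 1 = i then 1 else 0 := by
  rw [Finset.mem_Icc] at hi
  simp only [E, if_pos hi]
  congr 1
  exact propext (by omega)

theorem E_add {j : ℕ} (hj : 1 ≤ j) : E d lam (d + j) = lam j := by
  simp only [E, if_neg (show ¬(1 ≤ d + j ∧ d + j ≤ d) by omega), Nat.add_sub_cancel_left]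

theorem E_succ (j : Fin d) : E d lam (j + 1) = Pi.single j 1 := by
  funext x
  rw [E_apply (by simp)]
  simp [Pi.single_apply, Fin.ext_iff]

theorem apply_eq_zero_of_mem_span {ι R : Type*} [Semiring R] {T : Set (ι → R)} {j : ι}
    (hT : ∀ v ∈ T, v j = 0) {x : ι → R} (hx : x ∈ Submodule.span R T) : x j = 0 := by
  have : Submodule.span R T ≤ LinearMap.ker (LinearMap.proj j) :=
    Submodule.span_le.2 fun v hv => hT v hv
  exact this hx

theorem exists_apply_eq_mul_of_mem_span_insert {ι R : Type*} [CommRing R]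
    {T : Set (ι → R)} {C : Set ι} (hT : ∀ v ∈ T, ∀ j ∈ C, v j = 0) {u x : ι → R}
    (hx : x ∈ Submodule.span R (insert u T)) : ∃ a : R, ∀ j ∈ C, x j = a * u j := by
  obtain ⟨a, z, hz, rfl⟩ := Submodule.mem_span_insert.1 hx
  refine ⟨a, fun j hj => ?_⟩
  simp [apply_eq_zero_of_mem_span (fun v hv => hT v hv j hj) hz]

theorem E_mem_spanOf {I : Finset ℕ} {i : ℕ} (hi : i ∈ I) : E d lam i ∈ spanOf d lam I :=
  Submodule.subset_span ⟨i, hi, rfl⟩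

theorem spanOf_insert_add {S : Finset ℕ} {n : ℕ} (hn : 1 ≤ n) :
    spanOf d lam (insert (d + n) S) = Submodule.span ℚ (insert (lam n) (E d lam '' S)) := by
  rw [spanOf, Finset.coe_insert, Set.image_insert_eq, E_add hn]

theorem E_notMem_spanOf {S : Finset ℕ} (hS : S ⊆ Finset.Icc 1 d) {m : ℕ}
    (hm : m ∈ Finset.Icc 1 d) (hmS : m ∉ S) : E d lam m ∉ spanOf d lam S := by
  have hm' := Finset.mem_Icc.1 hm
  intro h
  have := apply_eq_zero_of_mem_span (j := ⟨m - 1, by omega⟩) ?_ h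
  · rw [E_apply hm, if_pos (by simp only; omega)] at this
    exact one_ne_zero this
  · rintro _ ⟨i, hi, rfl⟩
    change E d lam i _ = 0
    rw [E_apply (hS hi), if_neg]
    rintro rfl
    exact hmS (by simpa [show m - 1 + 1 = m by omega] using hi)

theorem linearIndepOn_E {S : Finset ℕ} (hS : S ⊆ Finset.Icc 1 d) :
    LinearIndepOn ℚ (E d lam) (S : Set ℕ) := by
  induction S using Finset.induction_on with
  | empty => simp
  | insert a S haS ih =>
    have hS' := Finset.insert_subset_iff.1 hS
    rw [Finset.coe_insert, linearIndepOn_insert (by simpa using haS)]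
    exact ⟨ih hS'.2, E_notMem_spanOf hS'.2 hS'.1 haS⟩

/-- Off the coordinates of `S`, the span of `λ_n` and the `e_i`, `i ∈ S`, is at most
one-dimensional, so it contains at most one further basis vector. -/
theorem eq_of_E_mem_spanOf_insert {S : Finset ℕ} (hS : S ⊆ Finset.Icc 1 d) {n m₁ m₂ : ℕ}
    (hn : 1 ≤ n) (hm₁ : m₁ ∈ Finset.Icc 1 d) (hm₂ : m₂ ∈ Finset.Icc 1 d)
    (hm₁S : m₁ ∉ S) (hm₂S : m₂ ∉ S) (h₁ : E d lam m₁ ∈ spanOf d lam (insert (d + n) S))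
    (h₂ : E d lam m₂ ∈ spanOf d lam (insert (d + n) S)) : m₁ = m₂ := by
  have hT : ∀ v ∈ E d lam '' S, ∀ j ∈ {j : Fin d | (j : ℕ) + 1 ∉ S}, v j = 0 := by
    rintro _ ⟨i, hi, rfl⟩ j hj
    rw [E_apply (hS hi), if_neg (by rintro rfl; exact hj hi)]
  rw [spanOf_insert_add hn] at h₁ h₂
  obtain ⟨a₁, ha₁⟩ := exists_apply_eq_mul_of_mem_span_insert hT h₁
  obtain ⟨a₂, ha₂⟩ := exists_apply_eq_mul_of_mem_span_insert hT h₂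
  by_contra hne
  rw [Finset.mem_Icc] at hm₁ hm₂
  have e₁₁ := ha₁ ⟨m₁ - 1, by omega⟩ (by simpa [show m₁ - 1 + 1 = m₁ by omega] using hm₁S)
  have e₁₂ := ha₁ ⟨m₂ - 1, by omega⟩ (by simpa [show m₂ - 1 + 1 = m₂ by omega] using hm₂S)
  have e₂₂ := ha₂ ⟨m₂ - 1, by omega⟩ (by simpa [show m₂ - 1 + 1 = m₂ by omega] using hm₂S)
  simp only [E_apply (Finset.mem_Icc.2 hm₁), E_apply (Finset.mem_Icc.2 hm₂)] at e₁₁ e₁₂ e₂₂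
  rw [if_pos (by omega)] at e₁₁ e₂₂
  rw [if_neg (by omega)] at e₁₂
  exact mul_ne_zero (left_ne_zero_of_mul (ne_of_eq_of_ne e₁₁.symm one_ne_zero))
    (right_ne_zero_of_mul (ne_of_eq_of_ne e₂₂.symm one_ne_zero)) e₁₂.symm

theorem exists_E_notMem_spanOf {I : Finset ℕ} (hI : I.card < d) :
    ∃ m ∈ Finset.Icc 1 d, E d lam m ∉ spanOf d lam I := by
  by_contra! h
  have htop : spanOf d lam I = ⊤ := by
    rw [eq_top_iff, ← (Pi.basisFun ℚ (Fin d)).span_eq, Submodule.span_le]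
    rintro _ ⟨j, rfl⟩
    simpa [E_succ] using h (j + 1) (by simp)
  have hle : Module.finrank ℚ (spanOf d lam I) ≤ I.card := by
    have := finrank_span_finset_le_card (R := ℚ) (I.image (E d lam))
    rw [Finset.coe_image] at this
    exact this.trans Finset.card_image_le
  rw [htop, finrank_top, Module.finrank_fin_fun] at hle
  omega

end Vectors

section Indices

variable {d g : ℕ} {lam : ℕ → Fin d → ℚ} {ν : Fin d → ℚ}

theorem pair_E_le_of_keyIdx_le {i j : ℕ} (h : keyIdx d lam ν i ≤ keyIdx d lam ν j) :
    pair d ν (E d lam i) ≤ pair d ν (E d lam j) := by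
  rcases Prod.Lex.le_iff.1 h with h | h
  exacts [h.le, h.1.le]

theorem pair_E_lt_of_keyIdx_le {i j : ℕ} (hji : j < i)
    (h : keyIdx d lam ν i ≤ keyIdx d lam ν j) :
    pair d ν (E d lam i) < pair d ν (E d lam j) := by
  rcases Prod.Lex.le_iff.1 h with h | h
  exacts [h, absurd h.2 (not_le.2 hji)]

theorem leastIdx_spec {S : Finset ℕ} (hS : S.Nonempty) :
    leastIdx d lam ν S ∈ S ∧ ∀ x ∈ S, keyIdx d lam ν (leastIdx d lam ν S) ≤ keyIdx d lam ν x := by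
  obtain ⟨i, hi, hkey⟩ := Finset.mem_image.1 (Finset.min'_mem _ (hS.image (keyIdx d lam ν)))
  have hleast : leastIdx d lam ν S = i := by
    rw [leastIdx, dif_pos hS, ← hkey]
    rfl
  rw [hleast, hkey]
  exact ⟨hi, fun x hx => Finset.min'_le _ _ (Finset.mem_image_of_mem _ hx)⟩

theorem nVal_eq_zero_iff {I : Finset ℕ} : nVal d I = 0 ↔ ∀ i ∈ I, i ≤ d := by
  unfold nVal
  split_ifs with h
  · have := (Finset.mem_filter.1 (Finset.min'_mem _ h)).2
    obtain ⟨i, hi⟩ := h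
    simp only [Finset.mem_filter] at hi
    exact iff_of_false (by omega) fun hle => by have := hle i hi.1; omega
  · simp only [Finset.not_nonempty_iff_eq_empty, Finset.filter_eq_empty_iff] at h
    exact iff_of_true rfl fun i hi => by have := h hi; omega

theorem add_nVal_mem {I : Finset ℕ} (hn : nVal d I ≠ 0) : d + nVal d I ∈ I := by
  unfold nVal at hn ⊢
  split_ifs at hn ⊢ with h
  · have := Finset.mem_filter.1 (Finset.min'_mem _ h)
    rw [Nat.add_sub_cancel' (by omega)]
    exact this.1
  · exact absurd rfl hn

theorem nVal_insert_of_le {I : Finset ℕ} {i : ℕ} (hi : i ≤ d) :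
    nVal d (insert i I) = nVal d I := by
  unfold nVal
  rw [Finset.filter_insert, if_neg (by omega)]

theorem nVal_insert_add {I : Finset ℕ} (hI : ∀ i ∈ I, i ≤ d) {j : ℕ} (hj : 1 ≤ j) :
    nVal d (insert (d + j) I) = j := by
  have hfilter : (insert (d + j) I).filter (fun i => d + 1 ≤ i) = {d + j} := by
    rw [Finset.filter_insert, if_pos (by omega), Finset.filter_false_of_mem]
    · rfl
    · intro i hi
      have := hI i hi
      omega
  simp only [nVal, hfilter, Finset.singleton_nonempty, dif_pos, Finset.min'_singleton,
    Nat.add_sub_cancel_left]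

theorem mVal_spec {I : Finset ℕ} (hm : mVal d lam I ≠ 0) :
    mVal d lam I ∈ Finset.Icc 1 d ∧ mVal d lam I ∉ I ∧ E d lam (mVal d lam I) ∈ spanOf d lam I := by
  unfold mVal at hm ⊢
  split_ifs at hm ⊢ with h
  · have := Finset.min'_mem _ h
    simp only [Finset.mem_sdiff, Finset.mem_filter] at this
    exact ⟨this.1.1, this.2, this.1.2⟩
  · exact absurd rfl hm

theorem tVal_spec {I : Finset ℕ} (ht : tVal d g lam I ≠ g + 1) :
    tVal d g lam I ∈ Finset.Icc 1 g ∧ lam (tVal d g lam I) ∉ spanOf d lam I := by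
  unfold tVal at ht ⊢
  split_ifs at ht ⊢ with h
  · exact Finset.mem_filter.1 (Finset.min'_mem _ h)
  · exact absurd rfl ht

theorem nVal_ne_zero_of_mVal_ne_zero {I : Finset ℕ} (hI : I ⊆ Finset.Icc 1 (d + g))
    (hm : mVal d lam I ≠ 0) : nVal d I ≠ 0 := by
  intro hn
  have hsmall : I ⊆ Finset.Icc 1 d := fun i hi => by
    have := Finset.mem_Icc.1 (hI hi)
    exact Finset.mem_Icc.2 ⟨this.1, nVal_eq_zero_iff.1 hn i hi⟩
  obtain ⟨hm₁, hmI, hmspan⟩ := mVal_spec hm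
  exact E_notMem_spanOf hsmall hm₁ hmI hmspan

end Indices

def LamBelowMissing (d : ℕ) (lam : ℕ → Fin d → ℚ) (ν : Fin d → ℚ) (I : Finset ℕ) : Prop :=
  nVal d I ≠ 0 → ∀ m ∈ Finset.Icc 1 d, m ∉ I →
    pair d ν (lam (nVal d I)) < pair d ν (E d lam m)

section Algorithm

variable {d g : ℕ} {lam : ℕ → Fin d → ℚ} {ν : Fin d → ℚ} {k : ℕ} {I : Finset ℕ}

theorem add_notMem_of_lam_notMem_spanOf {t : ℕ} (ht : 1 ≤ t) (h : lam t ∉ spanOf d lam I) :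
    d + t ∉ I := by
  intro hdt
  rw [← E_add (lam := lam) ht] at h
  exact h (E_mem_spanOf hdt)

theorem IdxOk.eq_of_lt (hI : IdxOk d g lam k I) {a b : ℕ} (ha : a ∈ I) (hb : b ∈ I)
    (hda : d < a) (hdb : d < b) : a = b :=
  Finset.card_le_one.1 hI.2.2.1 a (Finset.mem_filter.2 ⟨ha, hda⟩) b (Finset.mem_filter.2 ⟨hb, hdb⟩)

theorem IdxOk.erase_subset_Icc (hI : IdxOk d g lam k I) :
    I.erase (d + nVal d I) ⊆ Finset.Icc 1 d := by
  intro i hi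
  obtain ⟨hne, hiI⟩ := Finset.mem_erase.1 hi
  have hi' := Finset.mem_Icc.1 (hI.2.1 hiI)
  refine Finset.mem_Icc.2 ⟨hi'.1, ?_⟩
  by_contra hid
  have hn : nVal d I ≠ 0 := fun hn => hid (nVal_eq_zero_iff.1 hn i hiI)
  exact hne (hI.eq_of_lt hiI (add_nVal_mem hn) (by omega) (by omega))

theorem IdxOk.insert_of_notMem_spanOf (hI : IdxOk d g lam k I) {m : ℕ}
    (hm : m ∈ Finset.Icc 1 d) (hmI : E d lam m ∉ spanOf d lam I) :
    IdxOk d g lam (k + 1) (insert m I) := by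
  have hmI' : m ∉ I := fun h => hmI (E_mem_spanOf h)
  have hm' := Finset.mem_Icc.1 hm
  refine ⟨by rw [Finset.card_insert_of_notMem hmI', hI.1],
    Finset.insert_subset (Finset.mem_Icc.2 ⟨hm'.1, by omega⟩) hI.2.1, ?_, ?_⟩
  · rw [Finset.filter_insert, if_neg (by omega)]
    exact hI.2.2.1
  · show LinearIndepOn ℚ (E d lam) ↑(insert m I)
    rw [Finset.coe_insert, linearIndepOn_insert (by simpa using hmI')]
    exact ⟨hI.2.2.2, hmI⟩

theorem IdxOk.swap (hI : IdxOk d g lam k I) (hn : nVal d I ≠ 0) {m t : ℕ}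
    (hm : m ∈ Finset.Icc 1 d) (hmI : m ∉ I) (hmspan : E d lam m ∈ spanOf d lam I)
    (ht : t ∈ Finset.Icc 1 g) (htspan : lam t ∉ spanOf d lam I) :
    IdxOk d g lam (k + 1) (insert m (insert (d + t) (I.erase (d + nVal d I)))) := by
  have hS := hI.erase_subset_Icc
  have hm' := Finset.mem_Icc.1 hm
  have ht' := Finset.mem_Icc.1 ht
  have hdtS : d + t ∉ I.erase (d + nVal d I) := fun h =>
    add_notMem_of_lam_notMem_spanOf ht'.1 htspan (Finset.mem_of_mem_erase h)
  have hmS : m ∉ insert (d + t) (I.erase (d + nVal d I)) := by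
    rw [Finset.mem_insert]
    rintro (h | h)
    · omega
    · exact hmI (Finset.mem_of_mem_erase h)
  refine ⟨?_, ?_, ?_, ?_⟩
  · rw [Finset.card_insert_of_notMem hmS, Finset.card_insert_of_notMem hdtS,
      Finset.card_erase_add_one (add_nVal_mem hn), hI.1]
  · exact Finset.insert_subset (Finset.mem_Icc.2 ⟨hm'.1, by omega⟩)
      (Finset.insert_subset (Finset.mem_Icc.2 ⟨by omega, by omega⟩)
        ((Finset.erase_subset _ _).trans hI.2.1))
  · refine (Finset.card_le_card (t := {d + t}) ?_).trans (Finset.card_singleton _).le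
    intro i hi
    simp only [Finset.mem_filter, Finset.mem_insert] at hi
    rcases hi with ⟨rfl | rfl | hi, hdi⟩
    · omega
    · exact Finset.mem_singleton_self _
    · have := Finset.mem_Icc.1 (hS hi)
      omega
  · show LinearIndepOn ℚ (E d lam) ↑(insert m (insert (d + t) (I.erase (d + nVal d I))))
    rw [Finset.insert_comm, Finset.coe_insert,
      linearIndepOn_insert fun h => (Finset.mem_insert.1 h).elim (fun _ => by omega) hdtS]
    refine ⟨linearIndepOn_E (Finset.insert_subset hm hS), fun h => htspan ?_⟩
    rw [E_add ht'.1] at h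
    refine Submodule.span_le.2 ?_ h
    rintro _ ⟨i, hi, rfl⟩
    rcases Finset.mem_insert.1 hi with rfl | hi
    exacts [hmspan, E_mem_spanOf (Finset.mem_of_mem_erase hi)]

theorem iVal_spec (hkd : k < d) (hI : IdxOk d g lam k I) :
    iVal d g lam ν k I ∉ I ∧ IdxOk d g lam (k + 1) (insert (iVal d g lam ν k I) I) ∧
      ∀ m ∈ Finset.Icc 1 d, E d lam m ∉ spanOf d lam I →
        keyIdx d lam ν (iVal d g lam ν k I) ≤ keyIdx d lam ν m := by
  unfold iVal
  have hF : ∀ m ∈ Finset.Icc 1 d, E d lam m ∉ spanOf d lam I →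
      m ∈ (Finset.Icc 1 (d + g)).filter fun i => IdxOk d g lam (k + 1) (insert i I) :=
    fun m hm hmI => Finset.mem_filter.2
      ⟨Finset.Icc_subset_Icc_right (by omega) hm, hI.insert_of_notMem_spanOf hm hmI⟩
  obtain ⟨m, hm, hmI⟩ := exists_E_notMem_spanOf (lam := lam) (hI.1.trans_lt hkd)
  obtain ⟨hmem, hkey⟩ := leastIdx_spec (lam := lam) (ν := ν) ⟨m, hF m hm hmI⟩
  have hA := (Finset.mem_filter.1 hmem).2
  refine ⟨fun h => ?_, hA, fun m hm hmI => hkey m (hF m hm hmI)⟩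
  have := hA.1
  rw [Finset.insert_eq_of_mem h, hI.1] at this
  omega

theorem lamBelowMissing_insert_iVal (hkd : k < d) (hI : IdxOk d g lam k I)
    (hlam : LamBelowMissing d lam ν I) :
    LamBelowMissing d lam ν (insert (iVal d g lam ν k I) I) := by
  obtain ⟨hi₀I, hA, hkey⟩ := iVal_spec (ν := ν) hkd hI
  set i₀ := iVal d g lam ν k I
  intro hn m hm hmA
  have hmI : m ∉ I := fun h => hmA (Finset.mem_insert_of_mem h)
  by_cases hi₀d : i₀ ≤ d
  · rw [nVal_insert_of_le hi₀d] at hn ⊢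
    exact hlam hn m hm hmI
  obtain ⟨j, hj⟩ : ∃ j, i₀ = d + j := ⟨i₀ - d, by omega⟩
  have hIsmall : I ⊆ Finset.Icc 1 d := fun i hi => by
    have hi' := Finset.mem_Icc.1 (hI.2.1 hi)
    refine Finset.mem_Icc.2 ⟨hi'.1, ?_⟩
    by_contra hid
    have := hA.eq_of_lt (Finset.mem_insert_self _ _) (Finset.mem_insert_of_mem hi)
      (by omega) (by omega)
    exact hi₀I (this ▸ hi)
  have hlt := pair_E_lt_of_keyIdx_le (by simp at hm; omega)
    (hkey m hm (E_notMem_spanOf hIsmall hm hmI))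
  rw [hj] at hlt
  rwa [hj, nVal_insert_add (fun i hi => (Finset.mem_Icc.1 (hIsmall hi)).2) (by omega),
    ← E_add (lam := lam) (j := j) (by omega)]

theorem pair_lam_lt_of_swap_lt (hn : nVal d I ≠ 0) {m t i₀ : ℕ} (hm : m ≤ d) (hmI : m ∉ I)
    (ht : 1 ≤ t) (hdtI : d + t ∉ I) (hi₀I : i₀ ∉ I)
    (hlt : pair d ν (∑ i ∈ insert m (insert (d + t) (I.erase (d + nVal d I))), E d lam i) <
      pair d ν (∑ i ∈ insert i₀ I, E d lam i))
    (hnm : pair d ν (lam (nVal d I)) < pair d ν (E d lam m)) :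
    pair d ν (lam t) < pair d ν (E d lam i₀) := by
  have hdtS : d + t ∉ I.erase (d + nVal d I) := fun h => hdtI (Finset.mem_of_mem_erase h)
  have hmS : m ∉ insert (d + t) (I.erase (d + nVal d I)) := fun h =>
    (Finset.mem_insert.1 h).elim (fun _ => by omega) fun h => hmI (Finset.mem_of_mem_erase h)
  rw [Finset.sum_insert hmS, Finset.sum_insert hdtS, Finset.sum_insert hi₀I,
    ← Finset.add_sum_erase _ _ (add_nVal_mem hn), E_add ht,
    E_add (Nat.one_le_iff_ne_zero.2 hn)] at hlt
  simp only [pair_add] at hlt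
  linarith

theorem lamBelowMissing_swap (hI : IdxOk d g lam k I) (hn : nVal d I ≠ 0) {m t i₀ : ℕ}
    (hm : m ∈ Finset.Icc 1 d) (hmI : m ∉ I) (hmspan : E d lam m ∈ spanOf d lam I) (ht : 1 ≤ t)
    (hkey : ∀ m ∈ Finset.Icc 1 d, E d lam m ∉ spanOf d lam I →
      keyIdx d lam ν i₀ ≤ keyIdx d lam ν m)
    (hlt : pair d ν (lam t) < pair d ν (E d lam i₀)) :
    LamBelowMissing d lam ν (insert m (insert (d + t) (I.erase (d + nVal d I)))) := by
  have hS := hI.erase_subset_Icc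
  have hI' : insert (d + nVal d I) (I.erase (d + nVal d I)) = I :=
    Finset.insert_erase (add_nVal_mem hn)
  intro _ m' hm' hm'B
  rw [nVal_insert_of_le (Finset.mem_Icc.1 hm).2,
    nVal_insert_add (fun i hi => (Finset.mem_Icc.1 (hS hi)).2) ht]
  have hm'S : m' ∉ I.erase (d + nVal d I) := fun h =>
    hm'B (Finset.mem_insert_of_mem (Finset.mem_insert_of_mem h))
  have hm'span : E d lam m' ∉ spanOf d lam I := fun h =>
    hm'B <| Finset.mem_insert.2 <| Or.inl <|
      eq_of_E_mem_spanOf_insert hS (Nat.one_le_iff_ne_zero.2 hn) hm' hm hm'S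
        (fun h => hmI (Finset.mem_of_mem_erase h)) (by rwa [hI']) (by rwa [hI'])
  exact hlt.trans_le (pair_E_le_of_keyIdx_le (hkey m' hm' hm'span))

theorem step_spec (hkd : k < d) (hI : IdxOk d g lam k I) (hlam : LamBelowMissing d lam ν I) :
    IdxOk d g lam (k + 1) (step d g lam ν k I) ∧ LamBelowMissing d lam ν (step d g lam ν k I) := by
  obtain ⟨hi₀I, hA, hkey⟩ := iVal_spec (ν := ν) hkd hI
  have hAspec := And.intro hA (lamBelowMissing_insert_iVal hkd hI hlam)
  simp only [step]
  by_cases hdiscard : mVal d lam I = 0 ∨ tVal d g lam I = g + 1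
  · rw [if_pos hdiscard]
    exact hAspec
  obtain ⟨hm, ht⟩ := not_or.1 hdiscard
  have hn := nVal_ne_zero_of_mVal_ne_zero hI.2.1 hm
  obtain ⟨hm₁, hmI, hmspan⟩ := mVal_spec hm
  obtain ⟨ht₁, htspan⟩ := tVal_spec ht
  have hdtI := add_notMem_of_lam_notMem_spanOf (Finset.mem_Icc.1 ht₁).1 htspan
  rw [if_neg hdiscard, if_neg hn]
  split_ifs with hab
  · exact hAspec
  · refine ⟨hI.swap hn hm₁ hmI hmspan ht₁ htspan,
      lamBelowMissing_swap hI hn hm₁ hmI hmspan (Finset.mem_Icc.1 ht₁).1 hkey ?_⟩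
    exact pair_lam_lt_of_swap_lt hn (Finset.mem_Icc.1 hm₁).2 hmI (Finset.mem_Icc.1 ht₁).1 hdtI
      hi₀I (not_le.1 hab) (hlam hn _ hm₁ hmI)

theorem W_succ (hk : 1 ≤ k) : W d g lam ν (k + 1) = step d g lam ν k (W d g lam ν k) := by
  obtain ⟨j, rfl⟩ : ∃ j, k = j + 1 := ⟨k - 1, by omega⟩
  rfl

theorem W_one_spec (hg : 1 ≤ g) (hlam₁ : lam 1 ≠ 0) :
    IdxOk d g lam 1 (W d g lam ν 1) ∧ LamBelowMissing d lam ν (W d g lam ν 1) := by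
  obtain ⟨hmem, hkey⟩ :=
    leastIdx_spec (lam := lam) (ν := ν) (Finset.insert_nonempty (d + 1) (Finset.Icc 1 d))
  change IdxOk d g lam 1 {leastIdx d lam ν _} ∧ LamBelowMissing d lam ν {leastIdx d lam ν _}
  set i₀ := leastIdx d lam ν (insert (d + 1) (Finset.Icc 1 d))
  have hcard : (({i₀} : Finset ℕ).filter fun i => d + 1 ≤ i).card ≤ 1 :=
    (Finset.card_filter_le _ _).trans (Finset.card_singleton _).le
  rcases Finset.mem_insert.1 hmem with h | h
  · rw [h] at hkey ⊢
    refine ⟨⟨Finset.card_singleton _, by simp [hg], h ▸ hcard, ?_⟩, ?_⟩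
    · show LinearIndepOn ℚ (E d lam) ↑({d + 1} : Finset ℕ)
      rw [Finset.coe_singleton, linearIndepOn_singleton_iff, E_add le_rfl]
      exact hlam₁
    · intro _ m hm _
      have hlt := pair_E_lt_of_keyIdx_le (by simp at hm; omega)
        (hkey m (Finset.mem_insert_of_mem hm))
      rwa [← insert_empty_eq, nVal_insert_add (by simp) le_rfl, ← E_add (lam := lam) le_rfl]
  · have hsmall := Finset.singleton_subset_iff.2 h
    refine ⟨⟨Finset.card_singleton _, hsmall.trans (Finset.Icc_subset_Icc_right (by omega)),
      hcard, linearIndepOn_E hsmall⟩, fun hn => absurd ?_ hn⟩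
    exact nVal_eq_zero_iff.2 fun i hi => (Finset.mem_Icc.1 (hsmall hi)).2

theorem W_spec (hg : 1 ≤ g) (hlam₁ : lam 1 ≠ 0) (hk : 1 ≤ k) (hkd : k ≤ d) :
    IdxOk d g lam k (W d g lam ν k) ∧ LamBelowMissing d lam ν (W d g lam ν k) := by
  induction k, hk using Nat.le_induction with
  | base => exact W_one_spec hg hlam₁
  | succ k hk ih =>
    obtain ⟨hI, hlam⟩ := ih (by omega)
    rw [W_succ hk]
    exact step_spec (by omega) hI hlam

end Algorithm

theorem statement3_general (d g : ℕ) (lam : ℕ → Fin d → ℚ) (hg : 1 ≤ g)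
    (hnotin : ∀ j, 1 ≤ j → j ≤ g → lam j ∉ Mlat d lam (j - 1))
    (ν : Fin d → ℚ)
    (k : ℕ) (hk1 : 1 ≤ k) (hkd : k ≤ d)
    (hm : mVal d lam (W d g lam ν k) ≠ 0) :
    nVal d (W d g lam ν k) ≠ 0 ∧
      pair d ν (lam (nVal d (W d g lam ν k))) <
        pair d ν (E d lam (mVal d lam (W d g lam ν k))) := by
  have hlam₁ : lam 1 ≠ 0 := fun h => hnotin 1 le_rfl hg (h ▸ zero_mem _)
  obtain ⟨hI, hlam⟩ := W_spec (ν := ν) hg hlam₁ hk1 hkd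
  have hn := nVal_ne_zero_of_mVal_ne_zero hI.2.1 hm
  obtain ⟨hm₁, hmI, -⟩ := mVal_spec hm
  exact ⟨hn, hlam hn _ hm₁ hmI⟩

/-- If the quantity `m(k)` associated to the algorithm's vector `w_k` is nonzero, then
`n(k)` is also nonzero and `⟨ν, λ_{n(k)}⟩ < ⟨ν, e_{m(k)}⟩`. -/
theorem statement3 (d g : ℕ) (lam : ℕ → Fin d → ℚ) (hd : 1 ≤ d) (hg : 1 ≤ g)
    (hnn : ∀ j, 1 ≤ j → j ≤ g → ∀ i, 0 ≤ lam j i)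
    (hmono : ∀ j, 1 ≤ j → j < g → ∀ i, lam j i ≤ lam (j + 1) i)
    (hnotin : ∀ j, 1 ≤ j → j ≤ g → lam j ∉ Mlat d lam (j - 1))
    (ν : Fin d → ℚ) (hν : ν ∈ Ndual d g lam)
    (hpos : ∀ i, 1 ≤ i → i ≤ d → 0 < pair d ν (E d lam i))
    (k : ℕ) (hk1 : 1 ≤ k) (hkd : k ≤ d)
    (hm : mVal d lam (W d g lam ν k) ≠ 0) :
    nVal d (W d g lam ν k) ≠ 0 ∧
      pair d ν (lam (nVal d (W d g lam ν k))) <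
        pair d ν (E d lam (mVal d lam (W d g lam ν k))) :=
  statement3_general d g lam hg hnotin ν k hk1 hkd hm

end QO
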